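/- arXiv:1406.0291 — 2 statements merged into one kernel-verified Lean document; each statement's English description precedes it below -/
import Mathlib

section
/- Let ζ, ν ∈ ℝ³ with ζ · ν = 0, ζ ≠ 0, ν ≠ 0. Consider the linear system in the six unknowns (x₁,…,x₆) given by: −ν₂x₄+ν₁x₅ = 0, −ν₃x₄+ν₁x₆ = 0, −ν₃x₅+ν₂x₆ = 0, −ν₂x₁+ν₁x₂−ζ₂x₄+ζ₁x₅ = 0, −ν₃x₁+ν₁x₃−ζ₃x₄+ζ₁x₆ = 0, −ν₃x₂+ν₂x₃−ζ₃x₅+ζ₂x₆ = 0, ζ₂x₁−ζ₁x₂ = 0, ζ₃x₁−ζ₁x₃ = 0, ζ₃x₂−ζ₂x₃ = 0. Then the solution space is one-dimensional and spanned by (ζ₁, ζ₂, ζ₃, ν₁, ν₂, ν₃). -/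
/-!
Write `u = (x₀, x₁, x₂)` and `w = (x₃, x₄, x₅)`. The system says exactly that
`ζ × u = 0`, `ν × w = 0` and `ν × u + ζ × w = 0`. The first two equations force
`u = a ζ` and `w = b ν`, and the third then reads `(b - a) (ζ × ν) = 0`. Two nonzero
orthogonal vectors are not parallel, so `ζ × ν ≠ 0` and hence `a = b`.
-/

open Matrix

theorem cross_eq_zero_iff_exists_smul {K : Type*} [Field K] {u v : Fin 3 → K} (hu : u ≠ 0) :
    u ⨯₃ v = 0 ↔ ∃ a : K, a • u = v := by
  rw [← not_iff_not, ← Ne, crossProduct_ne_zero_iff_linearIndependent,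
    LinearIndependent.pair_iff' hu, not_exists]

section Ordered

variable {K : Type*} [Field K] [LinearOrder K] [IsStrictOrderedRing K]

theorem cross_ne_zero_of_dotProduct_eq_zero {u v : Fin 3 → K} (hu : u ≠ 0) (hv : v ≠ 0)
    (huv : u ⬝ᵥ v = 0) : u ⨯₃ v ≠ 0 := by
  intro h
  obtain ⟨a, rfl⟩ := (cross_eq_zero_iff_exists_smul hu).1 h
  rw [dotProduct_smul, smul_eq_mul, mul_eq_zero, dotProduct_self_eq_zero] at huv
  rcases huv with rfl | rfl
  · exact hv (zero_smul K u)
  · exact hu rfl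

theorem cross_eq_zero_and_cross_add_cross_eq_zero_iff {ζ ν u w : Fin 3 → K} (hζ : ζ ≠ 0)
    (hν : ν ≠ 0) (horth : ζ ⬝ᵥ ν = 0) :
    (ζ ⨯₃ u = 0 ∧ ν ⨯₃ w = 0 ∧ ν ⨯₃ u + ζ ⨯₃ w = 0) ↔
      ∃ c : K, u = c • ζ ∧ w = c • ν := by
  constructor
  · rintro ⟨hu, hw, hmix⟩
    obtain ⟨a, rfl⟩ := (cross_eq_zero_iff_exists_smul hζ).1 hu
    obtain ⟨b, rfl⟩ := (cross_eq_zero_iff_exists_smul hν).1 hw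
    have hcross : (b - a) • ζ ⨯₃ ν = 0 := by
      rw [map_smul, map_smul, ← cross_anticomm ζ ν] at hmix
      linear_combination (norm := module) hmix
    have hab : b = a := sub_eq_zero.1 <|
      (smul_eq_zero.1 hcross).resolve_right (cross_ne_zero_of_dotProduct_eq_zero hζ hν horth)
    exact ⟨a, rfl, hab ▸ rfl⟩
  · rintro ⟨c, rfl, rfl⟩
    simp only [map_smul, cross_self, smul_zero, ← smul_add, cross_anticomm', and_self]

end Ordered

/-- the linear system (NonDegSys) for the six unknowns
`x = (g₁·ζ, g₂·ζ, g₃·ζ, g₁·ν, g₂·ν, g₃·ν)` with `ζ·ν = 0`, `ζ ≠ 0`, `ν ≠ 0`,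
has solution space spanned by `(ζ₁, ζ₂, ζ₃, ν₁, ν₂, ν₃)`. -/
theorem stmt_10 (ζ ν : Fin 3 → ℝ) (hζ : ζ ≠ 0) (hν : ν ≠ 0)
    (horth : dotProduct ζ ν = 0) :
    ∀ x : Fin 6 → ℝ,
      (-ν 1 * x 3 + ν 0 * x 4 = 0 ∧
       -ν 2 * x 3 + ν 0 * x 5 = 0 ∧
       -ν 2 * x 4 + ν 1 * x 5 = 0 ∧
       -ν 1 * x 0 + ν 0 * x 1 - ζ 1 * x 3 + ζ 0 * x 4 = 0 ∧
       -ν 2 * x 0 + ν 0 * x 2 - ζ 2 * x 3 + ζ 0 * x 5 = 0 ∧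
       -ν 2 * x 1 + ν 1 * x 2 - ζ 2 * x 4 + ζ 1 * x 5 = 0 ∧
       ζ 1 * x 0 - ζ 0 * x 1 = 0 ∧
       ζ 2 * x 0 - ζ 0 * x 2 = 0 ∧
       ζ 2 * x 1 - ζ 1 * x 2 = 0) ↔
      ∃ c : ℝ, x = c • ![ζ 0, ζ 1, ζ 2, ν 0, ν 1, ν 2] := by
  intro x
  refine Iff.trans ?_ <| (cross_eq_zero_and_cross_add_cross_eq_zero_iff hζ hν horth
    (u := ![x 0, x 1, x 2]) (w := ![x 3, x 4, x 5])).trans (exists_congr fun c => ?_)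
  · simp only [cross_apply, cons_add_cons, empty_add_empty, cons_eq_zero_iff, zero_empty,
      and_true, cons_val, cons_val_zero, cons_val_one]
    constructor
    · rintro ⟨e₁, e₂, e₃, e₄, e₅, e₆, e₇, e₈, e₉⟩
      refine ⟨⟨?_, ?_, ?_⟩, ⟨?_, ?_, ?_⟩, ?_, ?_, ?_⟩ <;> linarith
    · rintro ⟨⟨e₁, e₂, e₃⟩, ⟨e₄, e₅, e₆⟩, e₇, e₈, e₉⟩
      refine ⟨?_, ?_, ?_, ?_, ?_, ?_, ?_, ?_, ?_⟩ <;> linarith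
  · simp only [funext_iff, Fin.forall_fin_succ, Pi.smul_apply, smul_eq_mul, cons_val_zero,
      cons_val_succ, Fin.succ_zero_eq_one, Fin.succ_one_eq_two, IsEmpty.forall_iff, and_true,
      Fin.reduceSucc, and_assoc]
end

section
/- Let Ω ⊆ ℝⁿ be open and connected, let f: Ω → ℝ be continuous, and let a: Ω → ℝⁿ be continuous. Suppose that on the open set A = {x ∈ Ω : f(x) ≠ 0} one has that f is C¹ and ∇f(x) = f(x) a(x) for x ∈ A. If f is not identically zero, then f vanishes nowhere on Ω; in fact, for any p with f(p) ≠ 0 and any x ∈ Ω, f(x) = f(p) exp(∫ₚˣ a(y)·dy) along any path from p to x within Ω. -/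
/-!
Along a segment or path `γ`, the function `g = f ∘ γ` solves the scalar linear ODE `g' = c g`
wherever `g ≠ 0`, with `c = ⟪a ∘ γ, γ'⟫` continuous. Where `g` does not vanish this integrates
to `g s₁ = g s₀ · exp (∫ c)`. If `g` vanished somewhere on a segment `[a, b]` but not at `b`,
then at the last zero `t₀` the continuous function `g s · exp (∫ s..b, c)`, constant on
`(t₀, b]`, would be `0`; so the zero set of `f` in `Ω` is open. It is relatively closed by
continuity, so by connectedness it is empty once `f` is not identically zero.
-/

open scoped RealInnerProductSpace

open Set MeasureTheory AffineMap
open scoped Interval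

theorem eq_mul_exp_integral_of_hasDerivAt_mul {g c : ℝ → ℝ} {a b : ℝ}
    (hne : ∀ t ∈ [[a, b]], g t ≠ 0) (hderiv : ∀ t ∈ [[a, b]], HasDerivAt g (g t * c t) t)
    (hc : IntervalIntegrable c volume a b) :
    g b = g a * Real.exp (∫ t in a..b, c t) := by
  have hlog : ∫ t in a..b, c t = Real.log (g b) - Real.log (g a) :=
    intervalIntegral.integral_eq_sub_of_hasDerivAt
      (fun t ht => ((hderiv t ht).log (hne t ht)).congr_deriv (by field_simp [hne t ht])) hc
  have hsign : 0 < g b / g a := by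
    have hg : ContinuousOn g [[a, b]] := fun t ht => (hderiv t ht).continuousAt.continuousWithinAt
    by_contra! h
    have h0 : (0 : ℝ) ∈ [[g a, g b]] := by
      rcases div_nonpos_iff.mp h with h | h <;> simp only [mem_uIcc] <;> tauto
    obtain ⟨t, ht, hgt⟩ := intermediate_value_uIcc hg h0
    exact hne t ht hgt
  have hga := hne a left_mem_uIcc
  rw [hlog, ← Real.log_div (hne b right_mem_uIcc) hga, Real.exp_log hsign]
  field_simp

theorem eq_zero_of_hasDerivAt_mul {g c : ℝ → ℝ} {a b : ℝ} (hab : a ≤ b)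
    (hg : ContinuousOn g (Icc a b)) (hc : IntegrableOn c (Icc a b)) (hga : g a = 0)
    (hderiv : ∀ t ∈ Icc a b, g t ≠ 0 → HasDerivAt g (g t * c t) t) :
    g b = 0 := by
  by_contra hgb
  set S := Icc a b ∩ g ⁻¹' {0}
  have hSbdd : BddAbove S := ⟨b, fun t ht => ht.1.2⟩
  have hSc : IsClosed S := hg.preimage_isClosed_of_isClosed isClosed_Icc isClosed_singleton
  have ht₀ : sSup S ∈ S := hSc.csSup_mem ⟨a, left_mem_Icc.2 hab, hga⟩ hSbdd
  set t₀ := sSup S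
  have ht₀b : t₀ < b := ht₀.1.2.lt_of_ne fun h => hgb (h ▸ ht₀.2)
  have hsub : Icc t₀ b ⊆ Icc a b := Icc_subset_Icc_left ht₀.1.1
  have hconst : EqOn (fun s => g s * Real.exp (∫ t in s..b, c t)) (fun _ => g b) (Icc t₀ b) := by
    refine EqOn.of_subset_closure (fun s hs => ?_) ?_ continuousOn_const Ioc_subset_Icc_self
      (closure_Ioc ht₀b.ne).ge
    · have hIcc : Icc s b ⊆ Icc a b := (Icc_subset_Icc_left hs.1.le).trans hsub
      have hne : ∀ t ∈ [[s, b]], g t ≠ 0 := by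
        rw [uIcc_of_le hs.2]
        exact fun t ht h0 => notMem_of_csSup_lt (hs.1.trans_le ht.1) hSbdd ⟨hIcc ht, h0⟩
      refine (eq_mul_exp_integral_of_hasDerivAt_mul hne
        (fun t ht => hderiv t (hIcc (by rwa [uIcc_of_le hs.2] at ht)) (hne t ht)) ?_).symm
      · exact (intervalIntegrable_iff_integrableOn_Icc_of_le hs.2).mpr (hc.mono_set hIcc)
    · refine (hg.mono hsub).mul (ContinuousOn.rexp ?_)
      rw [← uIcc_of_le ht₀b.le]
      exact intervalIntegral.continuousOn_primitive_interval_left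
        (hc.mono_set (by rw [uIcc_of_le ht₀b.le]; exact hsub))
  have hgt₀ : g t₀ = 0 := ht₀.2
  exact hgb (by simpa [hgt₀] using (hconst (left_mem_Icc.2 ht₀b.le)).symm)

section

variable {E : Type*} [NormedAddCommGroup E] [InnerProductSpace ℝ E] [CompleteSpace E]

theorem HasGradientAt.comp_hasDerivAt {f : E → ℝ} {f' γ' : E} {γ : ℝ → E} {t : ℝ}
    (hf : HasGradientAt f f' (γ t)) (hγ : HasDerivAt γ γ' t) :
    HasDerivAt (f ∘ γ) ⟪f', γ'⟫ t := by
  simpa using (hasGradientAt_iff_hasFDerivAt.mp hf).comp_hasDerivAt t hγ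

variable {Ω : Set E} {f : E → ℝ} {a : E → E}

theorem hasDerivAt_comp_of_hasGradientAt_smul {γ : ℝ → E} {γ' : E} {t : ℝ}
    (hf : HasGradientAt f (f (γ t) • a (γ t)) (γ t)) (hγ : HasDerivAt γ γ' t) :
    HasDerivAt (f ∘ γ) (f (γ t) * ⟪a (γ t), γ'⟫) t := by
  simpa only [real_inner_smul_left] using hf.comp_hasDerivAt hγ

theorem isOpen_zeros_of_hasGradientAt_smul (hΩ : IsOpen Ω) (hf : ContinuousOn f Ω)
    (ha : ContinuousOn a Ω) (hgrad : ∀ x ∈ Ω, f x ≠ 0 → HasGradientAt f (f x • a x) x) :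
    IsOpen {x ∈ Ω | f x = 0} := by
  rw [Metric.isOpen_iff]
  rintro x ⟨hxΩ, hfx⟩
  obtain ⟨r, hr, hball⟩ := Metric.isOpen_iff.mp hΩ x hxΩ
  refine ⟨r, hr, fun y hy => ⟨hball hy, ?_⟩⟩
  have hseg : MapsTo (lineMap x y) (Icc (0 : ℝ) 1) Ω := fun t ht =>
    hball ((convex_ball x r).segment_subset (Metric.mem_ball_self hr) hy
      (lineMap_mem_segment ℝ x y ht))
  have hline : ContinuousOn (lineMap x y : ℝ → E) (Icc 0 1) := lineMap_continuous.continuousOn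
  simpa using eq_zero_of_hasDerivAt_mul (c := fun t => ⟪a (lineMap x y t), y - x⟫) zero_le_one
    (hf.comp hline hseg) ((ha.comp hline hseg).inner continuousOn_const).integrableOn_Icc
    (by simpa using hfx) fun t ht hne =>
      hasDerivAt_comp_of_hasGradientAt_smul (hgrad _ (hseg ht) hne) hasDerivAt_lineMap

theorem ne_zero_of_hasGradientAt_smul (hΩ : IsOpen Ω) (hΩc : IsPreconnected Ω)
    (hf : ContinuousOn f Ω) (ha : ContinuousOn a Ω)
    (hgrad : ∀ x ∈ Ω, f x ≠ 0 → HasGradientAt f (f x • a x) x) (hnontriv : ∃ x ∈ Ω, f x ≠ 0) :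
    ∀ x ∈ Ω, f x ≠ 0 := by
  obtain ⟨x₀, hx₀, hfx₀⟩ := hnontriv
  have hnonzero : IsOpen (Ω ∩ f ⁻¹' {0}ᶜ) := hf.isOpen_inter_preimage hΩ isOpen_compl_singleton
  have hzero : IsOpen {x ∈ Ω | f x = 0} := isOpen_zeros_of_hasGradientAt_smul hΩ hf ha hgrad
  have hcover : Ω ⊆ (Ω ∩ f ⁻¹' {0}ᶜ) ∪ {x ∈ Ω | f x = 0} := fun x hx =>
    (em (f x = 0)).elim (fun h => Or.inr ⟨hx, h⟩) fun h => Or.inl ⟨hx, h⟩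
  have hsub := hΩc.subset_left_of_subset_union hnonzero hzero
    (disjoint_left.mpr fun x hx hx' => hx.2 hx'.2) hcover ⟨x₀, hx₀, hx₀, hfx₀⟩
  exact fun x hx => (hsub hx).2

theorem eq_mul_exp_integral_of_hasGradientAt_smul {γ : ℝ → E} {s₀ s₁ : ℝ} (hγ : ContDiff ℝ 1 γ)
    (hγΩ : ∀ t ∈ [[s₀, s₁]], γ t ∈ Ω) (ha : ContinuousOn a Ω) (hne : ∀ x ∈ Ω, f x ≠ 0)
    (hgrad : ∀ x ∈ Ω, f x ≠ 0 → HasGradientAt f (f x • a x) x) :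
    f (γ s₁) = f (γ s₀) * Real.exp (∫ t in s₀..s₁, ⟪a (γ t), deriv γ t⟫) := by
  have hderiv : ∀ t, HasDerivAt γ (deriv γ t) t := fun t =>
    (hγ.differentiable one_ne_zero t).hasDerivAt
  refine eq_mul_exp_integral_of_hasDerivAt_mul (g := f ∘ γ) (fun t ht => hne _ (hγΩ t ht))
    (fun t ht => hasDerivAt_comp_of_hasGradientAt_smul
      (hgrad _ (hγΩ t ht) (hne _ (hγΩ t ht))) (hderiv t)) ?_
  exact ((ha.comp hγ.continuous.continuousOn hγΩ).inner
    (hγ.continuous_deriv le_rfl).continuousOn).intervalIntegrable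

end

/-- let `Ω ⊆ ℝⁿ` be open and connected, `f : Ω → ℝ` continuous,
`a : Ω → ℝⁿ` continuous, and suppose that on `A = {x ∈ Ω : f x ≠ 0}` the
function `f` is differentiable with `∇f = f a`.  If `f` is not identically zero
on `Ω`, then `f` vanishes nowhere on `Ω`, and for any `p` with `f p ≠ 0` and any
`x ∈ Ω`, along any C¹ path `γ` in `Ω` from `p` to `x` one has
`f x = f p · exp (∫₀¹ a(γ t) · γ'(t) dt)`. -/
theorem stmt_13 (n : ℕ) (Ω : Set (EuclideanSpace ℝ (Fin n)))
    (hΩ : IsOpen Ω) (hΩc : IsConnected Ω)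
    (f : EuclideanSpace ℝ (Fin n) → ℝ) (hf : ContinuousOn f Ω)
    (a : EuclideanSpace ℝ (Fin n) → EuclideanSpace ℝ (Fin n))
    (ha : ContinuousOn a Ω)
    (hgrad : ∀ x ∈ Ω, f x ≠ 0 → HasGradientAt f (f x • a x) x)
    (hnontriv : ∃ x ∈ Ω, f x ≠ 0) :
    (∀ x ∈ Ω, f x ≠ 0) ∧
    ∀ p ∈ Ω, f p ≠ 0 → ∀ x ∈ Ω,
      ∀ γ : ℝ → EuclideanSpace ℝ (Fin n), ContDiff ℝ 1 γ →
        (∀ t ∈ Set.Icc (0 : ℝ) 1, γ t ∈ Ω) → γ 0 = p → γ 1 = x →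
        f x = f p * Real.exp (∫ t in (0 : ℝ)..1, ⟪a (γ t), deriv γ t⟫) := by
  have hne := ne_zero_of_hasGradientAt_smul hΩ hΩc.isPreconnected hf ha hgrad hnontriv
  refine ⟨hne, ?_⟩
  rintro p - - x - γ hγ hγΩ rfl rfl
  rw [← uIcc_of_le zero_le_one] at hγΩ
  exact eq_mul_exp_integral_of_hasGradientAt_smul hγ hγΩ ha hne hgrad
end
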